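/- Let V be a finite set of n items partitioned into m disjoint groups V_1, …, V_m with |V_i| ≥ 2 for all i, let f : 2^V → ℝ be nonnegative and submodular, let α, β be reals with 1/2 < α ≤ β ≤ 1, let c be a nonnegative integer with n − c ≤ ∑_{i∈[m]} (|V_i| − ⌊α·|V_i|⌋), let γ ∈ [0,1], and define g(S) := f(V ∖ S). Suppose A ⊆ V satisfies |A ∩ V_i| ≤ |V_i| − ⌊α·|V_i|⌋ for every i and g(A) ≥ γ·g(T) for every T ⊆ V satisfying |T ∩ V_i| ≤ |V_i| − ⌊α·|V_i|⌋ for every i. For each group i with |A ∩ V_i| < |V_i| − ⌊α·|V_i|⌋, let B_i be a uniform random subset of V_i ∖ A of size |V_i| − ⌊α·|V_i|⌋ − |A ∩ V_i|, sampled independently across groups, and B_i = ∅ otherwise. Then E[f(V ∖ (A ∪ (⋃_{i∈[m]} B_i)))] ≥ (γ/3)·f(S) for every (α,β)-fair set S ⊆ V with |S| ≤ c. -/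

import Mathlib

/-!
Put `g X := f (A ∪ X)ᶜ`, a nonnegative submodular function with `g ∅ = f Aᶜ ≥ γ f S`, since
`Sᶜ` meets the constraints under which `A` is `γ`-optimal. As `α > 1/2` and every group has at
least two items, `k i ≤ 2/3 |V i \ A|`, so each item lies in the random set `R = ⋃ i, B i` with
probability at most `p = 2/3`, and it remains to show `E[g R] ≥ (1 - p) g ∅`.
By induction on `U`, `(1 - p) g ∅ + q g U ≤ E[g (R ∩ U)]` whenever `q ≤ p` bounds the inclusion
probabilities of the items of `U` from below: remove the item `u` of least inclusion
probability `x` from `U`; by submodularity, `u ∈ R` adds at least `g U - g (U \ {u})` to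
`g (R ∩ (U \ {u}))`, and `x g (U \ {u}) + x (g U - g (U \ {u})) = x g U ≥ q g U`.
-/

open Finset Function

def IsSubmodular {V : Type*} [DecidableEq V] (g : Finset V → ℝ) : Prop :=
  ∀ X Y : Finset V, X ⊆ Y → ∀ e ∉ Y, g (insert e Y) - g Y ≤ g (insert e X) - g X

namespace IsSubmodular

variable {V : Type*} [DecidableEq V] {g : Finset V → ℝ}

theorem comp_compl [Fintype V] (hg : IsSubmodular g) : IsSubmodular fun S ↦ g Sᶜ := by
  intro X Y hXY e he
  have heX : e ∈ Xᶜ := mem_compl.2 fun h ↦ he (hXY h)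
  have key := hg (Yᶜ.erase e) (Xᶜ.erase e) (erase_subset_erase e (compl_subset_compl.2 hXY)) e
    (notMem_erase e _)
  rw [insert_erase heX, insert_erase (mem_compl.2 he)] at key
  simp only [compl_insert]
  linarith

theorem comp_union (hg : IsSubmodular g) (A : Finset V) : IsSubmodular fun X ↦ g (A ∪ X) := by
  intro X Y hXY e he
  by_cases heA : e ∈ A
  · simp [union_insert, heA]
  · simpa only [union_insert] using
      hg _ _ (union_subset_union_right hXY) e (by simp [heA, he])

theorem sub_le_sub_inter_erase (hg : IsSubmodular g) {U R : Finset V} {u : V} (hu : u ∈ U)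
    (huR : u ∈ R) : g U - g (U.erase u) ≤ g (R ∩ U) - g (R ∩ U.erase u) := by
  have hRU : insert u (R ∩ U.erase u) = R ∩ U := by
    rw [inter_erase, insert_erase (mem_inter.2 ⟨huR, hu⟩)]
  simpa only [insert_erase hu, hRU] using
    hg (R ∩ U.erase u) (U.erase u) inter_subset_right u (notMem_erase u U)

section Expectation

variable {ι : Type*} {𝒞 : Finset ι} {R : ι → Finset V} {w : ι → ℝ} {p : ℝ}

theorem le_sum_mul_apply_inter (hg : IsSubmodular g) (hg₀ : ∀ S, 0 ≤ g S)
    (hw : ∀ B ∈ 𝒞, 0 ≤ w B) (hp : ∀ v, ∑ B ∈ 𝒞 with v ∈ R B, w B ≤ p * ∑ B ∈ 𝒞, w B)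
    (U : Finset V) (q : ℝ) (hqU : ∀ v ∈ U, q ≤ ∑ B ∈ 𝒞 with v ∈ R B, w B)
    (hqp : q ≤ p * ∑ B ∈ 𝒞, w B) :
    (1 - p) * (∑ B ∈ 𝒞, w B) * g ∅ + q * g U ≤ ∑ B ∈ 𝒞, w B * g (R B ∩ U) := by
  induction U using Finset.strongInduction generalizing q with
  | H U ih =>
  rcases U.eq_empty_or_nonempty with rfl | hU
  · simp only [inter_empty, ← sum_mul]
    nlinarith [mul_le_mul_of_nonneg_right hqp (hg₀ ∅)]
  set x := fun v ↦ ∑ B ∈ 𝒞 with v ∈ R B, w B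
  obtain ⟨u, hu, hmin⟩ := exists_min_image U x hU
  have ih' := ih (U.erase u) (erase_ssubset hu) (x u) (fun v hv ↦ hmin v (mem_of_mem_erase hv))
    (hp u)
  have step : ∀ B ∈ 𝒞, w B * g (R B ∩ U.erase u) + (if u ∈ R B then w B else 0) *
      (g U - g (U.erase u)) ≤ w B * g (R B ∩ U) := by
    intro B hB
    split_ifs with huR
    · nlinarith [hg.sub_le_sub_inter_erase hu huR, hw B hB]
    · rw [inter_erase, erase_eq_of_notMem (by simp [huR])]
      simp
  have hsum := sum_le_sum step
  rw [sum_add_distrib, ← sum_mul, ← sum_filter] at hsum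
  nlinarith [mul_le_mul_of_nonneg_right (hqU u hu) (hg₀ U)]

theorem one_sub_mul_sum_mul_le_sum_mul (hg : IsSubmodular g) (hg₀ : ∀ S, 0 ≤ g S)
    (hw : ∀ B ∈ 𝒞, 0 ≤ w B) (hp₀ : 0 ≤ p)
    (hp : ∀ v, ∑ B ∈ 𝒞 with v ∈ R B, w B ≤ p * ∑ B ∈ 𝒞, w B) :
    (1 - p) * (∑ B ∈ 𝒞, w B) * g ∅ ≤ ∑ B ∈ 𝒞, w B * g (R B) := by
  have key := hg.le_sum_mul_apply_inter hg₀ hw hp (𝒞.biUnion R) 0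
    (fun v _ ↦ sum_nonneg fun B hB ↦ hw B (mem_filter.1 hB).1)
    (mul_nonneg hp₀ (sum_nonneg hw))
  rw [zero_mul, add_zero] at key
  refine key.trans_eq (sum_congr rfl fun B hB ↦ ?_)
  rw [inter_eq_left.2 (subset_biUnion_of_mem R hB)]

end Expectation

end IsSubmodular

theorem Fintype.card_filter_piFinset_apply_mem {ι : Type*} [Fintype ι] [DecidableEq ι]
    {α : ι → Type*} [∀ i, DecidableEq (α i)] (s : ∀ i, Finset (α i)) (i : ι) {t : Finset (α i)}
    (hts : t ⊆ s i) :
    #{f ∈ Fintype.piFinset s | f i ∈ t} = #t * ∏ j ∈ univ.erase i, #(s j) := by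
  rw [← Fintype.piFinset_update_eq_filter_piFinset_mem _ _ hts, Fintype.card_piFinset,
    ← mul_prod_erase _ _ (mem_univ i), Function.update_self]
  congr 1
  refine Finset.prod_congr rfl fun j hj ↦ ?_
  rw [Function.update_of_ne (ne_of_mem_erase hj)]

theorem Finset.card_filter_mem_powersetCard_mul {α : Type*} [DecidableEq α] {W : Finset α}
    {v : α} (hv : v ∈ W) (k : ℕ) :
    #{b ∈ W.powersetCard k | v ∈ b} * #W = k * #(W.powersetCard k) := by
  cases k with
  | zero => simp
  | succ k =>
    obtain ⟨n, hn⟩ : ∃ n, #W = n + 1 := ⟨#W - 1, by have := card_pos.2 ⟨v, hv⟩; omega⟩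
    simp_rw [← singleton_subset_iff]
    rw [card_filter_powersetCard_subset _ _ _ (singleton_subset_iff.2 hv) (by simp),
      card_powersetCard, hn, card_singleton, Nat.add_sub_cancel, Nat.add_sub_cancel,
      mul_comm, Nat.add_one_mul_choose_eq, mul_comm]

theorem card_filter_mem_biUnion_piFinset_le {V ι : Type*} [Fintype ι] [DecidableEq ι]
    [DecidableEq V] {W : ι → Finset V} (hW : Pairwise (Disjoint on W)) {k : ι → ℕ} {p : ℝ}
    (hp₀ : 0 ≤ p) (hk : ∀ i, (k i : ℝ) ≤ p * #(W i)) (v : V) :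
    (#{B ∈ Fintype.piFinset (fun i ↦ (W i).powersetCard (k i)) | v ∈ univ.biUnion B} : ℝ) ≤
      p * #(Fintype.piFinset fun i ↦ (W i).powersetCard (k i)) := by
  set 𝒞 := Fintype.piFinset fun i ↦ (W i).powersetCard (k i) with h𝒞
  have hB : ∀ B ∈ 𝒞, ∀ i, B i ⊆ W i := fun B hB𝒞 i ↦
    (mem_powersetCard.1 (Fintype.mem_piFinset.1 hB𝒞 i)).1
  by_cases hv : ∃ i, v ∈ W i
  swap
  · have hempty : {B ∈ 𝒞 | v ∈ univ.biUnion B} = ∅ := filter_eq_empty_iff.2 fun B hB𝒞 hvB ↦ by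
      obtain ⟨i, -, hvi⟩ := mem_biUnion.1 hvB
      exact hv ⟨i, hB B hB𝒞 i hvi⟩
    rw [hempty, card_empty, Nat.cast_zero]
    positivity
  obtain ⟨i, hvi⟩ := hv
  have hfilter : {B ∈ 𝒞 | v ∈ univ.biUnion B} =
      {B ∈ 𝒞 | B i ∈ {b ∈ (W i).powersetCard (k i) | v ∈ b}} := by
    refine filter_congr fun B hB𝒞 ↦ ⟨fun hvB ↦ ?_, fun h ↦ ?_⟩
    · obtain ⟨j, -, hvj⟩ := mem_biUnion.1 hvB
      obtain rfl : j = i := by_contra fun hji ↦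
        disjoint_left.1 (hW hji) (hB B hB𝒞 j hvj) hvi
      exact mem_filter.2 ⟨Fintype.mem_piFinset.1 hB𝒞 j, hvj⟩
    · exact mem_biUnion.2 ⟨i, mem_univ i, (mem_filter.1 h).2⟩
  have hcount : #{B ∈ 𝒞 | v ∈ univ.biUnion B} * #(W i) = k i * #𝒞 := by
    rw [hfilter, h𝒞, Fintype.card_filter_piFinset_apply_mem (fun i ↦ (W i).powersetCard (k i)) i
        (filter_subset (v ∈ ·) _),
      Fintype.card_piFinset, ← mul_prod_erase _ _ (mem_univ i), mul_right_comm,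
      card_filter_mem_powersetCard_mul hvi, mul_assoc]
  have hWi : (0 : ℝ) < #(W i) := by exact_mod_cast card_pos.2 ⟨v, hvi⟩
  have hcount' : (#{B ∈ 𝒞 | v ∈ univ.biUnion B} : ℝ) * #(W i) = k i * #𝒞 := by
    exact_mod_cast hcount
  refine le_of_mul_le_mul_right ?_ hWi
  rw [hcount']
  nlinarith [hk i, (Nat.cast_nonneg #𝒞 : (0 : ℝ) ≤ _)]

theorem Nat.le_three_mul_floor_mul {α : ℝ} (hα : 1 / 2 < α) {n : ℕ} (hn : 2 ≤ n) :
    n ≤ 3 * ⌊α * n⌋₊ := by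
  have hn' : (2 : ℝ) ≤ n := by exact_mod_cast hn
  have h₁ : 1 ≤ ⌊α * n⌋₊ := Nat.le_floor (by push_cast; nlinarith)
  have h₂ : (n : ℝ) < 2 * ⌊α * n⌋₊ + 2 := by nlinarith [Nat.lt_floor_add_one (α * n)]
  have h₂' : n < 2 * ⌊α * n⌋₊ + 2 := by exact_mod_cast h₂
  omega

theorem stmt_19_general {V : Type*} [Fintype V] [DecidableEq V]
    (m : ℕ) (Vg : Fin m → Finset V)
    (hdisj : ∀ i j : Fin m, i ≠ j → Disjoint (Vg i) (Vg j))
    (hsize : ∀ i : Fin m, 2 ≤ (Vg i).card)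
    (f : Finset V → ℝ)
    (hf_nonneg : ∀ S : Finset V, 0 ≤ f S)
    (hf_submod : ∀ X Y : Finset V, X ⊆ Y → ∀ e ∉ Y,
      f (insert e Y) - f Y ≤ f (insert e X) - f X)
    (α β γ : ℝ) (hα : 1 / 2 < α)
    (c : ℕ)
    (A : Finset V)
    (hApx : ∀ T : Finset V,
      (∀ i : Fin m, (T ∩ Vg i).card ≤ (Vg i).card - ⌊α * ((Vg i).card : ℝ)⌋₊) →
      γ * f (Tᶜ) ≤ f (Aᶜ))
    (k : Fin m → ℕ)
    (hk : ∀ i : Fin m, k i = (Vg i).card - ⌊α * ((Vg i).card : ℝ)⌋₊ - (A ∩ Vg i).card)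
    (𝒞 : Finset (Fin m → Finset V))
    (h𝒞 : 𝒞 = Fintype.piFinset fun i => (Vg i \ A).powersetCard (k i)) :
    ∀ S : Finset V,
      (∀ i : Fin m, ⌊α * ((Vg i).card : ℝ)⌋₊ ≤ (S ∩ Vg i).card ∧
        (S ∩ Vg i).card ≤ ⌊β * ((Vg i).card : ℝ)⌋₊) →
      S.card ≤ c →
      (γ / 3) * f S ≤
        (∑ B ∈ 𝒞, f ((A ∪ Finset.univ.biUnion fun i => B i)ᶜ)) / (𝒞.card : ℝ) := by
  intro S hS _
  have hk₃ : ∀ i, 3 * k i ≤ 2 * #(Vg i \ A) := fun i ↦ by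
    have := Nat.le_three_mul_floor_mul hα (hsize i)
    rw [hk i, card_sdiff]
    omega
  have hpos : 0 < #𝒞 := by
    rw [h𝒞]
    exact card_pos.2 <| Fintype.piFinset_nonempty.2 fun i ↦ powersetCard_nonempty.2 (by
      have := hk₃ i
      omega)
  have hmem : ∀ v, (#{B ∈ 𝒞 | v ∈ univ.biUnion B} : ℝ) ≤ 2 / 3 * #𝒞 := fun v ↦ by
    subst h𝒞
    refine card_filter_mem_biUnion_piFinset_le
      (fun i j hij ↦ (hdisj i j hij).mono sdiff_le sdiff_le) (by norm_num) (fun i ↦ ?_) v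
    have : (3 * k i : ℝ) ≤ 2 * #(Vg i \ A) := by exact_mod_cast hk₃ i
    linarith
  have hsub : IsSubmodular fun X ↦ f (A ∪ X)ᶜ :=
    (IsSubmodular.comp_compl hf_submod).comp_union A
  have hexp : (1 - 2 / 3) * (∑ _B ∈ 𝒞, (1 : ℝ)) * f (A ∪ ∅)ᶜ ≤
      ∑ B ∈ 𝒞, 1 * f (A ∪ univ.biUnion B)ᶜ :=
    hsub.one_sub_mul_sum_mul_le_sum_mul (fun _ ↦ hf_nonneg _) (fun _ _ ↦ zero_le_one)
      (by norm_num) fun v ↦ by simpa only [sum_const, nsmul_one] using hmem v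
  have hopt : γ * f S ≤ f Aᶜ := by
    refine compl_compl S ▸ hApx Sᶜ fun i ↦ ?_
    rw [inter_comm, ← sdiff_eq_inter_compl, card_sdiff]
    have := (hS i).1
    omega
  simp only [sum_const, nsmul_eq_mul, mul_one, one_mul, union_empty] at hexp
  rw [le_div_iff₀ (by exact_mod_cast hpos)]
  nlinarith [mul_le_mul_of_nonneg_left hopt (Nat.cast_nonneg #𝒞 : (0 : ℝ) ≤ #𝒞)]

/-- All groups have size at least 2, `1/2 < α ≤ β ≤ 1`,
`n - c ≤ ∑ i, (|V i| - ⌊α |V i|⌋)`, and `g S := f (V \ S) = f Sᶜ`.  Suppose `A`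
satisfies `|A ∩ V i| ≤ |V i| - ⌊α |V i|⌋` for every `i` and is a `γ`-approximation
(w.r.t. `g`) among all sets satisfying these constraints.  Augmenting `A` with
independent uniform random backup sets `B i ⊆ V i \ A` of size
`|V i| - ⌊α |V i|⌋ - |A ∩ V i|` (natural subtraction; `B i = ∅` when equality already
holds) and returning the complement yields
`E[f(V \ (A ∪ ⋃ i, B i))] ≥ (γ/3) * f S` for every `(α,β)`-fair set `S` with `|S| ≤ c`. -/
theorem stmt_19 {V : Type*} [Fintype V] [DecidableEq V]
    (m : ℕ) (Vg : Fin m → Finset V)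
    (hdisj : ∀ i j : Fin m, i ≠ j → Disjoint (Vg i) (Vg j))
    (hcover : Finset.univ.biUnion Vg = (Finset.univ : Finset V))
    (hsize : ∀ i : Fin m, 2 ≤ (Vg i).card)
    (f : Finset V → ℝ)
    (hf_nonneg : ∀ S : Finset V, 0 ≤ f S)
    (hf_submod : ∀ X Y : Finset V, X ⊆ Y → ∀ e ∉ Y,
      f (insert e Y) - f Y ≤ f (insert e X) - f X)
    (α β γ : ℝ) (hα : 1 / 2 < α) (hαβ : α ≤ β) (hβ1 : β ≤ 1)
    (hγ0 : 0 ≤ γ) (hγ1 : γ ≤ 1)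
    (c : ℕ)
    (hc : Fintype.card V - c ≤
      ∑ i : Fin m, ((Vg i).card - ⌊α * ((Vg i).card : ℝ)⌋₊))
    (A : Finset V)
    (hA : ∀ i : Fin m, (A ∩ Vg i).card ≤ (Vg i).card - ⌊α * ((Vg i).card : ℝ)⌋₊)
    (hApx : ∀ T : Finset V,
      (∀ i : Fin m, (T ∩ Vg i).card ≤ (Vg i).card - ⌊α * ((Vg i).card : ℝ)⌋₊) →
      γ * f (Tᶜ) ≤ f (Aᶜ))
    (k : Fin m → ℕ)
    (hk : ∀ i : Fin m, k i = (Vg i).card - ⌊α * ((Vg i).card : ℝ)⌋₊ - (A ∩ Vg i).card)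
    (𝒞 : Finset (Fin m → Finset V))
    (h𝒞 : 𝒞 = Fintype.piFinset fun i => (Vg i \ A).powersetCard (k i)) :
    ∀ S : Finset V,
      (∀ i : Fin m, ⌊α * ((Vg i).card : ℝ)⌋₊ ≤ (S ∩ Vg i).card ∧
        (S ∩ Vg i).card ≤ ⌊β * ((Vg i).card : ℝ)⌋₊) →
      S.card ≤ c →
      (γ / 3) * f S ≤
        (∑ B ∈ 𝒞, f ((A ∪ Finset.univ.biUnion fun i => B i)ᶜ)) / (𝒞.card : ℝ) :=
  stmt_19_general m Vg hdisj hsize f hf_nonneg hf_submod α β γ hα c A hApx k hk 𝒞 h𝒞
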